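/- arXiv:2112.08515 — 4 statements merged into one kernel-verified Lean document; each statement's English description precedes it below -/
import Mathlib

section
/- Injectivity of the quotient map Ŝ (key step in the proof of Lemma 2.3): let d ≥ 1, k ≥ 1, and for each multi-index α ∈ ℕ^{d+1} with |α| = k let r_α ∈ P_k(T̂); set r̄ := Σ_{|μ|=k} b_μ r_μ. If ⟨b_α (r_α − r̄), b_β⟩_{T̂} = 0 for all pairs of multi-indices α ≠ β with |α| = |β| = k, then r_α = r̄ on T̂ for every α; in particular all the polynomials r_α coincide. -/
open MeasureTheory Finset

noncomputable section

/-- The standard reference simplex `T̂ ⊂ ℝ^d`. -/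
def refSimplex (d : ℕ) : Set (Fin d → ℝ) :=
  {x | (∀ i, 0 ≤ x i) ∧ ∑ i, x i ≤ 1}

/-- Barycentric coordinates on the reference simplex. -/
def bary (d : ℕ) (j : Fin (d + 1)) (x : Fin d → ℝ) : ℝ :=
  if h : j = 0 then 1 - ∑ i, x i else x (j.pred h)

/-- The Bernstein polynomial `b_α` of degree `|α|`. -/
def bern (d : ℕ) (α : Fin (d + 1) → ℕ) (x : Fin d → ℝ) : ℝ :=
  (((∑ i, α i).factorial : ℝ) / ∏ i, ((α i).factorial : ℝ)) * ∏ i, (bary d i x) ^ (α i)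

/-- `f` is (the restriction to `T̂` of) a polynomial of total degree at most `m`. -/
def IsPolyOn (d m : ℕ) (f : (Fin d → ℝ) → ℝ) : Prop :=
  ∃ p : MvPolynomial (Fin d) ℝ, p.totalDegree ≤ m ∧
    ∀ x ∈ refSimplex d, f x = MvPolynomial.eval x p

/-- The `L²` inner product on the reference simplex. -/
def ipT (d : ℕ) (f g : (Fin d → ℝ) → ℝ) : ℝ :=
  ∫ x in refSimplex d, f x * g x

namespace QuotInj

/-! ### Basic facts about barycentric coordinates and Bernstein polynomials -/

lemma bary_zero (d : ℕ) (x : Fin d → ℝ) : bary d 0 x = 1 - ∑ i, x i := by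
  simp [bary]

lemma bary_succ (d : ℕ) (i : Fin d) (x : Fin d → ℝ) : bary d i.succ x = x i := by
  simp [bary, Fin.succ_ne_zero i]

lemma continuous_bary (d : ℕ) (j : Fin (d + 1)) : Continuous (bary d j) := by
  unfold bary
  rcases eq_or_ne j 0 with h | h
  · subst h
    simp only [dif_pos]
    exact continuous_const.sub (continuous_finset_sum _ fun i _ => continuous_apply i)
  · simp only [dif_neg h]
    exact continuous_apply _

lemma continuous_bern (d : ℕ) (α : Fin (d + 1) → ℕ) : Continuous (bern d α) := by
  unfold bern
  exact continuous_const.mul (continuous_finset_prod _ fun i _ => (continuous_bary d i).pow _)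

lemma bary_nonneg {d : ℕ} {x : Fin d → ℝ} (hx : x ∈ refSimplex d) (j : Fin (d + 1)) :
    0 ≤ bary d j x := by
  rcases eq_or_ne j 0 with h | h
  · subst h; rw [bary_zero]; linarith [hx.2]
  · unfold bary; rw [dif_neg h]; exact hx.1 _

lemma bern_coeff_pos (d : ℕ) (α : Fin (d + 1) → ℕ) :
    0 < (((∑ i, α i).factorial : ℝ) / ∏ i, ((α i).factorial : ℝ)) := by
  apply div_pos
  · exact_mod_cast Nat.factorial_pos _
  · exact Finset.prod_pos fun i _ => by exact_mod_cast Nat.factorial_pos _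

lemma bern_nonneg {d : ℕ} {x : Fin d → ℝ} (hx : x ∈ refSimplex d) (α : Fin (d + 1) → ℕ) :
    0 ≤ bern d α x := by
  unfold bern
  exact mul_nonneg (bern_coeff_pos d α).le
    (Finset.prod_nonneg fun i _ => pow_nonneg (bary_nonneg hx i) _)

lemma sum_bary (d : ℕ) (x : Fin d → ℝ) : ∑ j, bary d j x = 1 := by
  rw [Fin.sum_univ_succ, bary_zero]
  simp only [bary_succ]
  ring

lemma bern_multinomial (d : ℕ) (α : Fin (d + 1) → ℕ) (x : Fin d → ℝ) :
    bern d α x = (Nat.multinomial Finset.univ α : ℝ) * ∏ i, bary d i x ^ α i := by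
  unfold bern
  congr 1
  rw [div_eq_iff (by
    exact ne_of_gt (Finset.prod_pos fun i _ => by exact_mod_cast Nat.factorial_pos ((α i))))]
  rw [mul_comm]
  exact_mod_cast (Nat.multinomial_spec Finset.univ α).symm

lemma sum_bern (d k : ℕ) (x : Fin d → ℝ) :
    ∑ μ ∈ Finset.Nat.antidiagonalTuple (d + 1) k, bern d μ x = 1 := by
  classical
  have h := Finset.sum_pow_eq_sum_piAntidiag (Finset.univ : Finset (Fin (d + 1)))
    (fun j => bary d j x) k
  rw [sum_bary, one_pow, Finset.piAntidiag_univ_fin_eq_antidiagonalTuple] at h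
  rw [h]
  exact Finset.sum_congr rfl fun μ _ => bern_multinomial d μ x

/-! ### Spanning: polynomials of degree ≤ k lie in the span of the Bernstein polynomials -/

lemma monomial_repr (d k : ℕ) (γ : Fin d → ℕ) (hγ : ∑ i, γ i ≤ k) :
    ∃ c : (Fin (d + 1) → ℕ) → ℝ, ∀ x : Fin d → ℝ,
      (∏ i, x i ^ γ i) = ∑ μ ∈ Finset.Nat.antidiagonalTuple (d + 1) k, c μ * bern d μ x := by
  classical
  set m := ∑ i, γ i with hm
  set γ' : Fin (d + 1) → ℕ := Fin.cons 0 γ with hγ'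
  have hγ'sum : ∑ j, γ' j = m := by rw [hγ', Fin.sum_cons]; simp [hm]
  set w : (Fin (d + 1) → ℕ) → ℝ := fun ν =>
    (Nat.multinomial Finset.univ ν : ℝ) * ((Nat.multinomial Finset.univ (ν + γ') : ℝ))⁻¹ with hw
  have hmem : ∀ ν ∈ Finset.Nat.antidiagonalTuple (d + 1) (k - m),
      ν + γ' ∈ Finset.Nat.antidiagonalTuple (d + 1) k := by
    intro ν hν
    rw [Finset.Nat.mem_antidiagonalTuple] at hν ⊢
    have : ∑ j, (ν + γ') j = (∑ j, ν j) + ∑ j, γ' j := by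
      simp [Finset.sum_add_distrib]
    rw [this, hν, hγ'sum]
    omega
  refine ⟨fun μ => ∑ ν ∈ Finset.Nat.antidiagonalTuple (d + 1) (k - m),
      if ν + γ' = μ then w ν else 0, fun x => ?_⟩
  have hRHS : (∑ μ ∈ Finset.Nat.antidiagonalTuple (d + 1) k,
        (∑ ν ∈ Finset.Nat.antidiagonalTuple (d + 1) (k - m),
          if ν + γ' = μ then w ν else 0) * bern d μ x)
      = ∑ ν ∈ Finset.Nat.antidiagonalTuple (d + 1) (k - m), w ν * bern d (ν + γ') x := by
    simp_rw [Finset.sum_mul]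
    rw [Finset.sum_comm]
    refine Finset.sum_congr rfl fun ν hν => ?_
    simp_rw [ite_mul, zero_mul]
    rw [Finset.sum_ite_eq, if_pos (hmem ν hν)]
  rw [hRHS]
  -- Now prove the monomial identity.
  have step1 : (∏ i, x i ^ γ i) = ∏ j, bary d j x ^ γ' j := by
    rw [Fin.prod_univ_succ]
    simp [hγ', bary_succ]
  have step2 : (∏ j, bary d j x ^ γ' j)
      = ∑ ν ∈ Finset.Nat.antidiagonalTuple (d + 1) (k - m),
          (Nat.multinomial Finset.univ ν : ℝ) * ∏ j, bary d j x ^ (ν j + γ' j) := by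
    have h1 : (∏ j, bary d j x ^ γ' j)
        = (∏ j, bary d j x ^ γ' j) * (∑ j, bary d j x) ^ (k - m) := by
      rw [sum_bary, one_pow, mul_one]
    rw [h1, Finset.sum_pow_eq_sum_piAntidiag, Finset.piAntidiag_univ_fin_eq_antidiagonalTuple,
      Finset.mul_sum]
    refine Finset.sum_congr rfl fun ν _ => ?_
    rw [mul_comm ((∏ j, bary d j x ^ γ' j) : ℝ), mul_assoc]
    congr 1
    rw [← Finset.prod_mul_distrib]
    exact Finset.prod_congr rfl fun j _ => by rw [pow_add, mul_comm]
  rw [step1, step2]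
  refine Finset.sum_congr rfl fun ν hν => ?_
  rw [bern_multinomial]
  have hpos : ((Nat.multinomial Finset.univ (ν + γ') : ℝ)) ≠ 0 := by
    exact_mod_cast (Nat.multinomial_pos _ _).ne'
  rw [hw]
  have : ∏ i, bary d i x ^ (ν + γ') i = ∏ j, bary d j x ^ (ν j + γ' j) := by
    exact Finset.prod_congr rfl fun j _ => rfl
  rw [this]
  field_simp

lemma poly_repr (d k : ℕ) (p : MvPolynomial (Fin d) ℝ) (hp : p.totalDegree ≤ k) :
    ∃ c : (Fin (d + 1) → ℕ) → ℝ, ∀ x : Fin d → ℝ,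
      MvPolynomial.eval x p = ∑ μ ∈ Finset.Nat.antidiagonalTuple (d + 1) k, c μ * bern d μ x := by
  classical
  have hmono : ∀ γ ∈ p.support, ∃ c : (Fin (d + 1) → ℕ) → ℝ, ∀ x : Fin d → ℝ,
      (∏ i, x i ^ γ i) = ∑ μ ∈ Finset.Nat.antidiagonalTuple (d + 1) k, c μ * bern d μ x := by
    intro γ hγ
    apply monomial_repr
    have h2 := MvPolynomial.le_totalDegree hγ
    have h3 : ∑ i, γ i = γ.sum fun _ e => e := by rw [Finsupp.sum_fintype]; intro _; rfl
    omega
  choose! c hc using hmono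
  refine ⟨fun μ => ∑ γ ∈ p.support, p.coeff γ * c γ μ, fun x => ?_⟩
  rw [MvPolynomial.eval_eq']
  simp_rw [Finset.sum_mul]
  rw [Finset.sum_comm]
  refine Finset.sum_congr rfl fun γ hγ => ?_
  rw [Finset.sum_congr rfl fun μ _ => (mul_assoc (p.coeff γ) (c γ μ) (bern d μ x))]
  rw [← Finset.mul_sum, ← hc γ hγ x]

/-! ### Topology and measure theory on the reference simplex -/

lemma isClosed_refSimplex (d : ℕ) : IsClosed (refSimplex d) := by
  have h1 : IsClosed {x : Fin d → ℝ | ∀ i, 0 ≤ x i} := by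
    rw [Set.setOf_forall]
    exact isClosed_iInter fun i => isClosed_le continuous_const (continuous_apply i)
  have h2 : IsClosed {x : Fin d → ℝ | ∑ i, x i ≤ 1} :=
    isClosed_le (continuous_finset_sum _ fun i _ => continuous_apply i) continuous_const
  exact (Set.setOf_and ▸ h1.inter h2 : _)

lemma isCompact_refSimplex (d : ℕ) : IsCompact (refSimplex d) := by
  refine IsCompact.of_isClosed_subset (isCompact_Icc (a := (0 : Fin d → ℝ)) (b := 1))
    (isClosed_refSimplex d) ?_
  intro x hx
  rw [Set.mem_Icc]
  constructor
  · intro i; exact hx.1 i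
  · intro i
    calc x i ≤ ∑ j, x j := Finset.single_le_sum (fun j _ => hx.1 j) (Finset.mem_univ i)
    _ ≤ 1 := hx.2

/-- The interior-like open subset of the simplex. -/
def Upos (d : ℕ) : Set (Fin d → ℝ) := {x | (∀ i, 0 < x i) ∧ ∑ i, x i < 1}

lemma isOpen_Upos (d : ℕ) : IsOpen (Upos d) := by
  have h1 : IsOpen {x : Fin d → ℝ | ∀ i, 0 < x i} := by
    rw [Set.setOf_forall]
    exact isOpen_iInter_of_finite fun i => isOpen_lt continuous_const (continuous_apply i)
  have h2 : IsOpen {x : Fin d → ℝ | ∑ i, x i < 1} :=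
    isOpen_lt (continuous_finset_sum _ fun i _ => continuous_apply i) continuous_const
  exact (Set.setOf_and ▸ h1.inter h2 : _)

lemma Upos_subset (d : ℕ) : Upos d ⊆ refSimplex d :=
  fun x hx => ⟨fun i => (hx.1 i).le, hx.2.le⟩

lemma refSimplex_subset_closure_Upos {d : ℕ} (hd : 1 ≤ d) :
    refSimplex d ⊆ closure (Upos d) := by
  intro y hy
  have hd' : (0 : ℝ) < d := by exact_mod_cast hd
  have hcpos : 0 < (2 * (d : ℝ))⁻¹ := by positivity
  set u : ℕ → (Fin d → ℝ) := fun n i => y i + (1 / ((n : ℝ) + 1)) * ((2 * (d : ℝ))⁻¹ - y i)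
    with hu
  have hεpos : ∀ n : ℕ, 0 < 1 / ((n : ℝ) + 1) := fun n => by positivity
  have hεle : ∀ n : ℕ, 1 / ((n : ℝ) + 1) ≤ 1 := fun n => by
    rw [div_le_one (by positivity)]
    have : (0 : ℝ) ≤ (n : ℝ) := Nat.cast_nonneg n
    linarith
  have htend : Filter.Tendsto u Filter.atTop (nhds y) := by
    rw [tendsto_pi_nhds]
    intro i
    have h0 : Filter.Tendsto (fun n : ℕ => (1 / ((n : ℝ) + 1)) * ((2 * (d : ℝ))⁻¹ - y i))
        Filter.atTop (nhds 0) := by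
      simpa using tendsto_one_div_add_atTop_nhds_zero_nat.mul_const ((2 * (d : ℝ))⁻¹ - y i)
    have goal_eq : (fun n : ℕ => u n i)
        = fun n : ℕ => y i + (1 / ((n : ℝ) + 1)) * ((2 * (d : ℝ))⁻¹ - y i) := rfl
    rw [goal_eq]
    have h1 := Filter.Tendsto.add (tendsto_const_nhds (x := y i)) h0
    rw [add_zero] at h1
    exact h1
  refine mem_closure_of_tendsto htend (Filter.Eventually.of_forall fun n => ?_)
  · have hε1 := hεpos n
    have hε2 := hεle n
    constructor
    · intro i
      have hyi := hy.1 i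
      have : u n i = y i * (1 - 1 / ((n : ℝ) + 1)) + (1 / ((n : ℝ) + 1)) * (2 * (d : ℝ))⁻¹ := by
        rw [hu]; ring
      rw [this]
      have h3 : 0 ≤ y i * (1 - 1 / ((n : ℝ) + 1)) := mul_nonneg hyi (by linarith)
      nlinarith
    · have hsum : ∑ i, u n i
          = (∑ i, y i) * (1 - 1 / ((n : ℝ) + 1)) + (1 / ((n : ℝ) + 1)) / 2 := by
        rw [hu]
        rw [Finset.sum_add_distrib, ← Finset.mul_sum, Finset.sum_sub_distrib]
        simp only [Finset.sum_const, Finset.card_univ, Fintype.card_fin, nsmul_eq_mul]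
        have : (d : ℝ) * (2 * (d : ℝ))⁻¹ = 1 / 2 := by
          field_simp
        rw [this]
        ring
      rw [hsum]
      have hy2 := hy.2
      have hynn : (0:ℝ) ≤ ∑ i, y i := Finset.sum_nonneg fun i _ => hy.1 i
      nlinarith

lemma bern_pos_on_Upos {d : ℕ} (α : Fin (d + 1) → ℕ) {x : Fin d → ℝ} (hx : x ∈ Upos d) :
    0 < bern d α x := by
  unfold bern
  apply mul_pos (bern_coeff_pos d α)
  apply Finset.prod_pos
  intro j _
  apply pow_pos
  rcases eq_or_ne j 0 with h | h
  · subst h; rw [bary_zero]; linarith [hx.2]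
  · unfold bary; rw [dif_neg h]; exact hx.1 _

lemma zero_on_Upos_of_integral_zero {d : ℕ} {g : (Fin d → ℝ) → ℝ} (hg : Continuous g)
    (hnn : ∀ x ∈ refSimplex d, 0 ≤ g x) (hz : ∫ x in refSimplex d, g x = 0) :
    ∀ x ∈ Upos d, g x = 0 := by
  have hMeas : MeasurableSet (refSimplex d) := (isClosed_refSimplex d).measurableSet
  by_contra h
  push_neg at h
  obtain ⟨x0, hx0U, hx0⟩ := h
  have hx0pos : 0 < g x0 := lt_of_le_of_ne (hnn x0 (Upos_subset d hx0U)) (Ne.symm hx0)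
  have h0le : 0 ≤ᵐ[volume.restrict (refSimplex d)] g :=
    (ae_restrict_iff' hMeas).2 (Filter.Eventually.of_forall hnn)
  have hint : IntegrableOn g (refSimplex d) volume :=
    hg.continuousOn.integrableOn_compact (isCompact_refSimplex d)
  have hae : g =ᵐ[volume.restrict (refSimplex d)] 0 :=
    (setIntegral_eq_zero_iff_of_nonneg_ae h0le hint).1 hz
  have hAmeas : MeasurableSet {x : Fin d → ℝ | g x ≠ 0} :=
    (isOpen_compl_singleton.preimage hg).measurableSet
  have hnull : volume ({x : Fin d → ℝ | g x ≠ 0} ∩ refSimplex d) = 0 := by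
    have h1 := hae
    rw [Filter.EventuallyEq, ae_iff] at h1
    simp only [Pi.zero_apply] at h1
    rw [Measure.restrict_apply hAmeas] at h1
    exact h1
  have hVopen : IsOpen ({x : Fin d → ℝ | 0 < g x} ∩ Upos d) :=
    (isOpen_lt continuous_const hg).inter (isOpen_Upos d)
  have hx0V : x0 ∈ {x : Fin d → ℝ | 0 < g x} ∩ Upos d := ⟨hx0pos, hx0U⟩
  have hpos : 0 < volume ({x : Fin d → ℝ | 0 < g x} ∩ Upos d) :=
    hVopen.measure_pos volume ⟨x0, hx0V⟩
  have hsub : {x : Fin d → ℝ | 0 < g x} ∩ Upos d ⊆ {x : Fin d → ℝ | g x ≠ 0} ∩ refSimplex d :=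
    fun x hx => ⟨ne_of_gt hx.1, Upos_subset d hx.2⟩
  have hle : volume ({x : Fin d → ℝ | 0 < g x} ∩ Upos d)
      ≤ volume ({x : Fin d → ℝ | g x ≠ 0} ∩ refSimplex d) := measure_mono hsub
  rw [hnull] at hle
  exact absurd (le_antisymm hle zero_le) hpos.ne'

lemma zero_on_refSimplex_of_zero_on_Upos {d : ℕ} (hd : 1 ≤ d) {g : (Fin d → ℝ) → ℝ}
    (hg : Continuous g) (h : ∀ x ∈ Upos d, g x = 0) : ∀ x ∈ refSimplex d, g x = 0 := by
  intro x hx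
  have hcl : IsClosed {y : Fin d → ℝ | g y = 0} := isClosed_eq hg continuous_const
  have : closure (Upos d) ⊆ {y : Fin d → ℝ | g y = 0} := closure_minimal h hcl
  exact this (refSimplex_subset_closure_Upos hd hx)

end QuotInj

open QuotInj

/-- **Injectivity of the quotient map `Ŝ`** (key step in the proof of Lemma 2.3):
if `r_α ∈ P_k(T̂)` for every multi-index `|α| = k` and
`⟨b_α (r_α − r̄), b_β⟩ = 0` for all `α ≠ β` with `|α| = |β| = k`, where
`r̄ = Σ_{|μ|=k} b_μ r_μ`, then `r_α = r̄` on `T̂` for every `α`; in particular all the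
polynomials `r_α` coincide on `T̂`. -/
theorem quotient_map_injective (d k : ℕ) (hd : 1 ≤ d) (hk : 1 ≤ k)
    (r : (Fin (d + 1) → ℕ) → (Fin d → ℝ) → ℝ)
    (hr : ∀ α : Fin (d + 1) → ℕ, ∑ i, α i = k → IsPolyOn d k (r α))
    (horth : ∀ α β : Fin (d + 1) → ℕ, ∑ i, α i = k → ∑ i, β i = k → α ≠ β →
      ipT d (fun x => bern d α x *
          (r α x - ∑ μ ∈ Finset.Nat.antidiagonalTuple (d + 1) k, bern d μ x * r μ x))
        (bern d β) = 0) :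
    (∀ α : Fin (d + 1) → ℕ, ∑ i, α i = k → ∀ x ∈ refSimplex d,
      r α x = ∑ μ ∈ Finset.Nat.antidiagonalTuple (d + 1) k, bern d μ x * r μ x) ∧
    (∀ α β : Fin (d + 1) → ℕ, ∑ i, α i = k → ∑ i, β i = k → ∀ x ∈ refSimplex d,
      r α x = r β x) := by
  classical
  have hMeas : MeasurableSet (refSimplex d) := (isClosed_refSimplex d).measurableSet
  have hK : IsCompact (refSimplex d) := isCompact_refSimplex d
  have hInt : ∀ {f : (Fin d → ℝ) → ℝ}, Continuous f → IntegrableOn f (refSimplex d) volume :=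
    fun hf => hf.continuousOn.integrableOn_compact hK
  have hATmem : ∀ μ ∈ Finset.Nat.antidiagonalTuple (d + 1) k, ∑ i, μ i = k :=
    fun μ hμ => Finset.Nat.mem_antidiagonalTuple.1 hμ
  set P : (Fin (d + 1) → ℕ) → MvPolynomial (Fin d) ℝ :=
    fun α => if h : ∑ i, α i = k then (hr α h).choose else 0 with hP
  have hPdeg : ∀ α, (P α).totalDegree ≤ k := by
    intro α
    by_cases h : ∑ i, α i = k
    · simp only [hP, dif_pos h]; exact (hr α h).choose_spec.1
    · simp [hP, dif_neg h]
  have hPeq : ∀ α, ∑ i, α i = k → ∀ x ∈ refSimplex d,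
      r α x = MvPolynomial.eval x (P α) := by
    intro α h
    simp only [hP, dif_pos h]
    exact (hr α h).choose_spec.2
  set R : (Fin (d + 1) → ℕ) → (Fin d → ℝ) → ℝ := fun α x => MvPolynomial.eval x (P α) with hR
  have hRcont : ∀ α, Continuous (R α) := fun α => MvPolynomial.continuous_eval (P α)
  set Rb : (Fin d → ℝ) → ℝ :=
    fun x => ∑ μ ∈ Finset.Nat.antidiagonalTuple (d + 1) k, bern d μ x * R μ x with hRb
  have hRbcont : Continuous Rb :=
    continuous_finset_sum _ fun μ _ => (continuous_bern d μ).mul (hRcont μ)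
  set s : (Fin (d + 1) → ℕ) → (Fin d → ℝ) → ℝ := fun α x => R α x - Rb x with hsdef
  have hscont : ∀ α, Continuous (s α) := fun α => (hRcont α).sub hRbcont
  have hbarEq : ∀ x ∈ refSimplex d,
      (∑ μ ∈ Finset.Nat.antidiagonalTuple (d + 1) k, bern d μ x * r μ x) = Rb x := by
    intro x hx
    exact Finset.sum_congr rfl fun μ hμ => by rw [hPeq μ (hATmem μ hμ) x hx]
  have hzero : ∀ x, ∑ α ∈ Finset.Nat.antidiagonalTuple (d + 1) k, bern d α x * s α x = 0 := by
    intro x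
    have h1 : ∑ α ∈ Finset.Nat.antidiagonalTuple (d + 1) k, bern d α x * s α x
        = (∑ α ∈ Finset.Nat.antidiagonalTuple (d + 1) k, bern d α x * R α x)
          - (∑ α ∈ Finset.Nat.antidiagonalTuple (d + 1) k, bern d α x) * Rb x := by
      simp only [hsdef, mul_sub]
      rw [Finset.sum_sub_distrib, Finset.sum_mul]
    rw [h1, sum_bern, one_mul]
    simp [hRb]
  -- Step A: orthogonality of `b_α s_α` to every `b_β`, off-diagonal case.
  have hOrth1 : ∀ α ∈ Finset.Nat.antidiagonalTuple (d + 1) k,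
      ∀ β ∈ Finset.Nat.antidiagonalTuple (d + 1) k, α ≠ β →
      ∫ x in refSimplex d, bern d α x * s α x * bern d β x = 0 := by
    intro α hα β hβ hne
    have h0 := horth α β (hATmem α hα) (hATmem β hβ) hne
    rw [ipT] at h0
    rw [← h0]
    apply setIntegral_congr_fun hMeas
    intro x hx
    have e1 : r α x = R α x := hPeq α (hATmem α hα) x hx
    have e2 : (∑ μ ∈ Finset.Nat.antidiagonalTuple (d + 1) k, bern d μ x * r μ x) = Rb x :=
      hbarEq x hx
    simp only [hsdef, e1, e2]
  -- Step A': full orthogonality, including the diagonal.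
  have hOrth : ∀ α ∈ Finset.Nat.antidiagonalTuple (d + 1) k,
      ∀ β ∈ Finset.Nat.antidiagonalTuple (d + 1) k,
      ∫ x in refSimplex d, bern d α x * s α x * bern d β x = 0 := by
    intro α hα β hβ
    by_cases hne : α = β
    · subst hne
      have hsum : ∑ α' ∈ Finset.Nat.antidiagonalTuple (d + 1) k,
          ∫ x in refSimplex d, bern d α' x * s α' x * bern d α x = 0 := by
        rw [← integral_finset_sum (f := fun i x => bern d i x * s i x * bern d α x) _ (fun i _ =>
          hInt (((continuous_bern d i).mul (hscont i)).mul (continuous_bern d α)))]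
        have hzz : ∀ x, (∑ α' ∈ Finset.Nat.antidiagonalTuple (d + 1) k,
            bern d α' x * s α' x * bern d α x) = 0 := by
          intro x
          rw [← Finset.sum_mul, hzero, zero_mul]
        rw [setIntegral_congr_fun hMeas (fun x _ => hzz x)]
        simp
      rw [Finset.sum_eq_single_of_mem α hα (fun b hb hbne => hOrth1 b hb α hα hbne)] at hsum
      exact hsum
    · exact hOrth1 α hα β hβ hne
  -- Step B: orthogonality of `b_α s_α` to every polynomial of degree ≤ k.
  have hOrthP : ∀ α ∈ Finset.Nat.antidiagonalTuple (d + 1) k,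
      ∀ p : MvPolynomial (Fin d) ℝ, p.totalDegree ≤ k →
      ∫ x in refSimplex d, bern d α x * s α x * MvPolynomial.eval x p = 0 := by
    intro α hα p hp
    obtain ⟨c, hc⟩ := poly_repr d k p hp
    have hpt : ∀ x, bern d α x * s α x * MvPolynomial.eval x p
        = ∑ μ ∈ Finset.Nat.antidiagonalTuple (d + 1) k,
            c μ * (bern d α x * s α x * bern d μ x) := by
      intro x
      rw [hc x, Finset.mul_sum]
      exact Finset.sum_congr rfl fun μ _ => by ring
    rw [setIntegral_congr_fun hMeas (fun x _ => hpt x)]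
    rw [integral_finset_sum (f := fun μ x => c μ * (bern d α x * s α x * bern d μ x)) _ (fun μ _ =>
      (hInt (((continuous_bern d α).mul (hscont α)).mul (continuous_bern d μ))).const_mul _)]
    refine Finset.sum_eq_zero fun μ hμ => ?_
    rw [integral_const_mul, hOrth α hα μ hμ, mul_zero]
  -- A fixed reference multi-index.
  set β0 : Fin (d + 1) → ℕ := Fin.cons k 0 with hβ0def
  have hβ0 : β0 ∈ Finset.Nat.antidiagonalTuple (d + 1) k := by
    rw [Finset.Nat.mem_antidiagonalTuple]
    rw [hβ0def, Fin.sum_cons]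
    simp
  -- Step C: the diagonal terms equal cross terms with `s β0`.
  have hterm : ∀ α ∈ Finset.Nat.antidiagonalTuple (d + 1) k,
      ∫ x in refSimplex d, bern d α x * s α x * s α x
        = ∫ x in refSimplex d, bern d α x * s α x * s β0 x := by
    intro α hα
    have hq : ∀ x, MvPolynomial.eval x (P α - P β0) = s α x - s β0 x := by
      intro x
      rw [map_sub]
      simp only [hsdef, hR]
      ring
    have hdeg : (P α - P β0).totalDegree ≤ k :=
      le_trans (MvPolynomial.totalDegree_sub _ _) (max_le (hPdeg α) (hPdeg β0))
    have h0 := hOrthP α hα _ hdeg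
    have heq : ∀ x, bern d α x * s α x * MvPolynomial.eval x (P α - P β0)
        = bern d α x * s α x * s α x - bern d α x * s α x * s β0 x := by
      intro x
      rw [hq x]
      ring
    rw [setIntegral_congr_fun hMeas (fun x _ => heq x)] at h0
    rw [integral_sub (f := fun x => bern d α x * s α x * s α x)
      (g := fun x => bern d α x * s α x * s β0 x)
      (hInt (((continuous_bern d α).mul (hscont α)).mul (hscont α)))
      (hInt (((continuous_bern d α).mul (hscont α)).mul (hscont β0)))] at h0
    linarith
  -- the sum of the cross terms vanishes
  have hsum0 : ∑ α ∈ Finset.Nat.antidiagonalTuple (d + 1) k,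
      ∫ x in refSimplex d, bern d α x * s α x * s β0 x = 0 := by
    rw [← integral_finset_sum (f := fun α x => bern d α x * s α x * s β0 x) _ (fun α _ =>
      hInt (((continuous_bern d α).mul (hscont α)).mul (hscont β0)))]
    have hzz : ∀ x, (∑ α ∈ Finset.Nat.antidiagonalTuple (d + 1) k,
        bern d α x * s α x * s β0 x) = 0 := by
      intro x
      rw [← Finset.sum_mul, hzero, zero_mul]
    rw [setIntegral_congr_fun hMeas (fun x _ => hzz x)]
    simp
  -- Step D: each diagonal term is zero.
  have hdiagsum : ∑ α ∈ Finset.Nat.antidiagonalTuple (d + 1) k,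
      ∫ x in refSimplex d, bern d α x * s α x * s α x = 0 := by
    rw [Finset.sum_congr rfl hterm]
    exact hsum0
  have hnn : ∀ α ∈ Finset.Nat.antidiagonalTuple (d + 1) k,
      0 ≤ ∫ x in refSimplex d, bern d α x * s α x * s α x := by
    intro α hα
    apply setIntegral_nonneg hMeas
    intro x hx
    rw [mul_assoc]
    exact mul_nonneg (bern_nonneg hx α) (mul_self_nonneg _)
  have hdiag0 : ∀ α ∈ Finset.Nat.antidiagonalTuple (d + 1) k,
      ∫ x in refSimplex d, bern d α x * s α x * s α x = 0 :=
    (Finset.sum_eq_zero_iff_of_nonneg hnn).1 hdiagsum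
  -- Step E: pointwise vanishing of `s α` on the simplex.
  have hsz : ∀ α ∈ Finset.Nat.antidiagonalTuple (d + 1) k, ∀ x ∈ refSimplex d, s α x = 0 := by
    intro α hα
    have hgcont : Continuous fun x => bern d α x * s α x * s α x :=
      ((continuous_bern d α).mul (hscont α)).mul (hscont α)
    have hgnn : ∀ x ∈ refSimplex d, 0 ≤ bern d α x * s α x * s α x := by
      intro x hx
      rw [mul_assoc]
      exact mul_nonneg (bern_nonneg hx α) (mul_self_nonneg _)
    have hgU : ∀ x ∈ Upos d, bern d α x * s α x * s α x = 0 :=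
      zero_on_Upos_of_integral_zero hgcont hgnn (hdiag0 α hα)
    have hsU : ∀ x ∈ Upos d, s α x = 0 := by
      intro x hx
      have hb : 0 < bern d α x := bern_pos_on_Upos α hx
      have h1 := hgU x hx
      rw [mul_assoc] at h1
      have h2 : s α x * s α x = 0 := (mul_eq_zero.1 h1).resolve_left hb.ne'
      exact mul_self_eq_zero.1 h2
    exact zero_on_refSimplex_of_zero_on_Upos hd (hscont α) hsU
  -- Conclusion.
  have main : ∀ α : Fin (d + 1) → ℕ, ∑ i, α i = k → ∀ x ∈ refSimplex d,
      r α x = ∑ μ ∈ Finset.Nat.antidiagonalTuple (d + 1) k, bern d μ x * r μ x := by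
    intro α hsig x hx
    have hαAT : α ∈ Finset.Nat.antidiagonalTuple (d + 1) k :=
      Finset.Nat.mem_antidiagonalTuple.2 hsig
    have h1 : r α x = R α x := hPeq α hsig x hx
    have h2 : s α x = 0 := hsz α hαAT x hx
    have h3 : R α x = Rb x := by
      have : R α x - Rb x = 0 := h2
      linarith
    rw [h1, h3, ← hbarEq x hx]
  exact ⟨main, fun α β hα hβ x hx => by rw [main α hα x hx, main β hβ x hx]⟩
end
end

section
/- Projections with same-space weights are orthogonal projections (Lemma 3.4, abstract form): let H be a real inner product space, N ∈ ℕ, let (b_i)_{i<N} be a linearly independent family in H, let S := span{b_0,…,b_{N−1}}, and let (ρ_i)_{i<N} be a family with ρ_i ∈ S for every i < N. Define P : H → H by P v := Σ_{i<N} ⟨v, ρ_i⟩ b_i and assume P s = s for all s ∈ S. Then for every v ∈ H the element P v is the orthogonal projection of v onto S; equivalently, ⟨v − P v, s⟩ = 0 for all s ∈ S. -/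
open scoped RealInnerProductSpace

/-!
With `Q w := Σ_i ⟨w, b_i⟩ ρ_i` we have `⟨P v, w⟩ = ⟨v, Q w⟩`, and `Q` maps `S` into `S`
because the weights lie in `S`. For `s, t ∈ S` this gives `⟨Q s, t⟩ = ⟨s, P t⟩ = ⟨s, t⟩`,
so `Q s - s ∈ S` is orthogonal to `S`, i.e. `Q s = s`. Hence
`⟨P v, s⟩ = ⟨v, Q s⟩ = ⟨v, s⟩` for every `s ∈ S`.
-/

section

variable {H : Type*} [NormedAddCommGroup H] [InnerProductSpace ℝ H]

theorem Submodule.eq_of_mem_of_forall_inner_eq {K : Submodule ℝ H} {x y : H}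
    (hx : x ∈ K) (hy : y ∈ K) (h : ∀ t ∈ K, ⟪x, t⟫ = ⟪y, t⟫) : x = y := by
  have hxy : x - y ∈ K := K.sub_mem hx hy
  have hself : ⟪x - y, x - y⟫ = 0 := by rw [inner_sub_left, h _ hxy, sub_self]
  exact sub_eq_zero.mp (inner_self_eq_zero.mp hself)

variable {K : Submodule ℝ H} {P Q : H → H}

theorem apply_eq_self_of_inner_adjoint_of_fixes (hadj : ∀ v w, ⟪P v, w⟫ = ⟪v, Q w⟫)
    (hQ : ∀ s ∈ K, Q s ∈ K) (hP : ∀ s ∈ K, P s = s) {s : H} (hs : s ∈ K) : Q s = s :=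
  K.eq_of_mem_of_forall_inner_eq (hQ s hs) hs fun t ht => by
    rw [real_inner_comm, ← hadj, hP t ht, real_inner_comm]

theorem inner_sub_apply_eq_zero_of_inner_adjoint_of_fixes (hadj : ∀ v w, ⟪P v, w⟫ = ⟪v, Q w⟫)
    (hQ : ∀ s ∈ K, Q s ∈ K) (hP : ∀ s ∈ K, P s = s) (v : H) {s : H} (hs : s ∈ K) :
    ⟪v - P v, s⟫ = 0 := by
  rw [inner_sub_left, hadj, apply_eq_self_of_inner_adjoint_of_fixes hadj hQ hP hs, sub_self]

theorem inner_sum_inner_smul_left {ι : Type*} [Fintype ι] (b ρ : ι → H) (v w : H) :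
    ⟪∑ i, ⟪v, ρ i⟫ • b i, w⟫ = ⟪v, ∑ i, ⟪w, b i⟫ • ρ i⟫ := by
  rw [sum_inner, inner_sum]
  refine Finset.sum_congr rfl fun i _ => ?_
  rw [real_inner_smul_left, real_inner_smul_right, real_inner_comm (b i)]
  ring

end

theorem same_order_weights_orthogonal_projection_general {H : Type*} [NormedAddCommGroup H]
    [InnerProductSpace ℝ H] (N : ℕ) (b : Fin N → H)
    (ρ : Fin N → H) (hρ : ∀ i : Fin N, ρ i ∈ Submodule.span ℝ (Set.range b))
    (hP : ∀ s ∈ Submodule.span ℝ (Set.range b), ∑ i : Fin N, ⟪s, ρ i⟫ • b i = s) :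
    ∀ v : H,
      (∑ i : Fin N, ⟪v, ρ i⟫ • b i) ∈ Submodule.span ℝ (Set.range b) ∧
      ∀ s ∈ Submodule.span ℝ (Set.range b),
        ⟪v - ∑ i : Fin N, ⟪v, ρ i⟫ • b i, s⟫ = 0 := by
  intro v
  refine ⟨Submodule.sum_mem _ fun i _ => Submodule.smul_mem _ _ (Submodule.subset_span ⟨i, rfl⟩),
    fun s hs => ?_⟩
  have hQ : ∀ t ∈ Submodule.span ℝ (Set.range b), ∑ i, ⟪t, b i⟫ • ρ i ∈
      Submodule.span ℝ (Set.range b) :=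
    fun _ _ => Submodule.sum_mem _ fun i _ => Submodule.smul_mem _ _ (hρ i)
  exact inner_sub_apply_eq_zero_of_inner_adjoint_of_fixes
    (P := fun v => ∑ i, ⟪v, ρ i⟫ • b i) (inner_sum_inner_smul_left b ρ) hQ hP v hs

/-- **Projections with same-space weights are orthogonal projections** (Lemma 3.4,
abstract form): let `(b_i)_{i<N}` be linearly independent in a real inner product space
`H`, let `S := span{b_0, …, b_{N−1}}`, let `ρ_i ∈ S`, and define
`P v := Σ_i ⟨v, ρ_i⟩ b_i`. If `P s = s` for all `s ∈ S`, then for every `v ∈ H` the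
element `P v` is the orthogonal projection of `v` onto `S`: it lies in `S` and
`⟨v − P v, s⟩ = 0` for all `s ∈ S`. -/
theorem same_order_weights_orthogonal_projection {H : Type*} [NormedAddCommGroup H]
    [InnerProductSpace ℝ H] (N : ℕ) (b : Fin N → H)
    (hb : LinearIndependent ℝ b)
    (ρ : Fin N → H) (hρ : ∀ i : Fin N, ρ i ∈ Submodule.span ℝ (Set.range b))
    (hP : ∀ s ∈ Submodule.span ℝ (Set.range b), ∑ i : Fin N, ⟪s, ρ i⟫ • b i = s) :
    ∀ v : H,
      (∑ i : Fin N, ⟪v, ρ i⟫ • b i) ∈ Submodule.span ℝ (Set.range b) ∧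
      ∀ s ∈ Submodule.span ℝ (Set.range b),
        ⟪v - ∑ i : Fin N, ⟪v, ρ i⟫ • b i, s⟫ = 0 :=
  same_order_weights_orthogonal_projection_general N b ρ hρ hP
end

section
/- Commutation of derivatives with the averaged Taylor polynomial (Lemma A.1 (ii)): let s ∈ ℕ, let 0 ≤ ℓ ≤ s, and let v : ℝ → X be of class C^s. Then for every τ ∈ ℝ, (iteratedDeriv ℓ (T^s v))(τ) = (T^{s−ℓ} (iteratedDeriv ℓ v))(τ), i.e., the ℓ-th derivative of T^s v at τ equals Σ_{j=0}^{s−ℓ} (1/j!) ∫_I ((τ−σ)^j · η(σ)) • (iteratedDeriv (ℓ+j) v)(σ) dσ. -/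
open MeasureTheory Finset

noncomputable section

/-- The averaged Taylor polynomial of order `s` of `v : ℝ → X` with respect to the
density `η` supported in the interval `I`:
`(T^s v)(τ) := Σ_{ℓ=0}^s (1/ℓ!) ∫_I ((τ−σ)^ℓ η(σ)) • v^{(ℓ)}(σ) dσ`. -/
def avgTaylor {X : Type*} [NormedAddCommGroup X] [NormedSpace ℝ X]
    (s : ℕ) (I : Set ℝ) (η : ℝ → ℝ) (v : ℝ → X) (τ : ℝ) : X :=
  ∑ ℓ ∈ Finset.range (s + 1),
    ((ℓ.factorial : ℝ))⁻¹ • ∫ σ in I, ((τ - σ) ^ ℓ * η σ) • iteratedDeriv ℓ v σ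

section aux
variable {X : Type*} [NormedAddCommGroup X] [NormedSpace ℝ X] [CompleteSpace X]

omit [NormedSpace ℝ X] [CompleteSpace X] in
lemma cont_integrableOn' (a b : ℝ) (g : ℝ → X) (hg : Continuous g) :
    IntegrableOn g (Set.Ioo a b) :=
  (hg.integrableOn_Icc (a := a) (b := b)).mono_set Set.Ioo_subset_Icc_self

lemma hasDerivAt_integral_pow' (a b : ℝ) (η : ℝ → ℝ) (hη : Continuous η)
    (w : ℝ → X) (hw : Continuous w) (ℓ : ℕ) (τ : ℝ) :
    HasDerivAt (fun t => ∫ σ in Set.Ioo a b, ((t - σ) ^ (ℓ + 1) * η σ) • w σ)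
      (((ℓ : ℝ) + 1) • ∫ σ in Set.Ioo a b, ((τ - σ) ^ ℓ * η σ) • w σ) τ := by
  have key := hasDerivAt_integral_of_dominated_loc_of_deriv_le (μ := volume.restrict (Set.Ioo a b))
    (F := fun t σ => ((t - σ) ^ (ℓ + 1) * η σ) • w σ)
    (F' := fun t σ => ((((ℓ : ℝ) + 1) * (t - σ) ^ ℓ * η σ)) • w σ)
    (x₀ := τ) (bound := fun σ => ((ℓ : ℝ) + 1) * (1 + |τ| + |σ|) ^ ℓ * |η σ| * ‖w σ‖)
    (Metric.ball_mem_nhds τ (by norm_num : (0:ℝ) < 1))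
    ?_ ?_ ?_ ?_ ?_ ?_
  · have h2 : (∫ σ in Set.Ioo a b, ((((ℓ : ℝ) + 1) * (τ - σ) ^ ℓ * η σ)) • w σ)
        = ((ℓ : ℝ) + 1) • ∫ σ in Set.Ioo a b, ((τ - σ) ^ ℓ * η σ) • w σ := by
      rw [← integral_smul]
      congr 1; funext σ; rw [smul_smul]; ring_nf
    rw [h2] at key
    exact key.2
  · filter_upwards with t
    exact Continuous.aestronglyMeasurable (by fun_prop)
  · exact (cont_integrableOn' a b _ (by fun_prop))
  · exact Continuous.aestronglyMeasurable (by fun_prop)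
  · filter_upwards with σ
    intro x hx
    rw [Metric.mem_ball, Real.dist_eq] at hx
    rw [norm_smul]
    have h1 : ‖((ℓ : ℝ) + 1) * (x - σ) ^ ℓ * η σ‖ = ((ℓ:ℝ)+1) * |x - σ| ^ ℓ * |η σ| := by
      rw [Real.norm_eq_abs, abs_mul, abs_mul, abs_pow,
        abs_of_nonneg (by positivity : (0:ℝ) ≤ (ℓ:ℝ)+1)]
    rw [h1]
    have h2 : |x - σ| ≤ 1 + |τ| + |σ| := by
      have h3 : |x - σ| ≤ |x - τ| + |τ - σ| := abs_sub_le x τ σ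
      have h4 : |τ - σ| ≤ |τ| + |σ| := abs_sub _ _
      linarith
    have h5 : |x - σ| ^ ℓ ≤ (1 + |τ| + |σ|) ^ ℓ := pow_le_pow_left₀ (abs_nonneg _) h2 ℓ
    have h6 : (0:ℝ) ≤ ((ℓ:ℝ)+1) * (|η σ| * ‖w σ‖) := by positivity
    calc ((ℓ:ℝ)+1) * |x - σ| ^ ℓ * |η σ| * ‖w σ‖
        = |x - σ| ^ ℓ * (((ℓ:ℝ)+1) * (|η σ| * ‖w σ‖)) := by ring
      _ ≤ (1 + |τ| + |σ|) ^ ℓ * (((ℓ:ℝ)+1) * (|η σ| * ‖w σ‖)) :=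
          mul_le_mul_of_nonneg_right h5 h6
      _ = ((ℓ:ℝ)+1) * (1 + |τ| + |σ|) ^ ℓ * |η σ| * ‖w σ‖ := by ring
  · exact cont_integrableOn' a b _ (by fun_prop)
  · filter_upwards with σ
    intro x hx
    have h1 : HasDerivAt (fun t : ℝ => (t - σ) ^ (ℓ + 1)) (((ℓ:ℝ)+1) * (x - σ) ^ ℓ) x := by
      have := ((hasDerivAt_id x).sub_const σ).fun_pow (ℓ + 1)
      simpa using this
    exact ((h1.mul_const (η σ)).smul_const (w σ)).congr_deriv (by ring_nf)

lemma avgTaylor_hasDerivAt' (a b : ℝ) (η : ℝ → ℝ) (hη : Continuous η)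
    (s : ℕ) (v : ℝ → X) (hv : ContDiff ℝ ((s + 1 : ℕ) : ℕ∞) v) (τ : ℝ) :
    HasDerivAt (avgTaylor (s + 1) (Set.Ioo a b) η v)
      (avgTaylor s (Set.Ioo a b) η (deriv v) τ) τ := by
  set g : ℕ → X := fun ℓ => if ℓ = 0 then 0 else
    (((ℓ - 1).factorial : ℝ))⁻¹ • ∫ σ in Set.Ioo a b,
      ((τ - σ) ^ (ℓ - 1) * η σ) • iteratedDeriv ℓ v σ with hg
  have hterm : ∀ ℓ ∈ Finset.range (s + 2), HasDerivAt
      (fun t => ((ℓ.factorial : ℝ))⁻¹ • ∫ σ in Set.Ioo a b,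
        ((t - σ) ^ ℓ * η σ) • iteratedDeriv ℓ v σ) (g ℓ) τ := by
    intro ℓ hℓ
    rw [Finset.mem_range] at hℓ
    cases ℓ with
    | zero => simpa [hg] using hasDerivAt_const τ _
    | succ k =>
      have hcw : Continuous (iteratedDeriv (k + 1) v) := by
        apply hv.continuous_iteratedDeriv (k + 1)
        have hks : k + 1 ≤ s + 1 := by omega
        exact_mod_cast hks
      have h1 := (hasDerivAt_integral_pow' a b η hη _ hcw k τ).const_smul
        (((k + 1).factorial : ℝ))⁻¹
      convert h1 using 1
      · rfl
      rw [hg]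
      simp only [Nat.succ_ne_zero, if_false, Nat.add_sub_cancel, smul_smul]
      congr 1
      rw [Nat.factorial_succ]
      push_cast
      field_simp
  have hsum := HasDerivAt.fun_sum hterm
  have heq : avgTaylor (s + 1) (Set.Ioo a b) η v = fun t => ∑ ℓ ∈ Finset.range (s + 2),
      ((ℓ.factorial : ℝ))⁻¹ • ∫ σ in Set.Ioo a b, ((t - σ) ^ ℓ * η σ) • iteratedDeriv ℓ v σ := by
    funext t; simp [avgTaylor]
  rw [heq]
  convert hsum using 1
  rw [Finset.sum_range_succ']
  simp only [hg, Nat.succ_ne_zero, if_false, if_pos rfl, Nat.add_sub_cancel, add_zero]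
  apply Finset.sum_congr rfl
  intro j _
  simp [avgTaylor, iteratedDeriv_succ']

end aux

/-- **Commutation of derivatives with the averaged Taylor polynomial** (Lemma A.1 (ii)):
for `ℓ ≤ s` and `v` of class `C^s`, the `ℓ`-th derivative of `T^s v` equals
`T^{s−ℓ}` applied to the `ℓ`-th derivative of `v`, i.e. it equals
`Σ_{j=0}^{s−ℓ} (1/j!) ∫_I ((τ−σ)^j η(σ)) • v^{(ℓ+j)}(σ) dσ`. -/
theorem iteratedDeriv_avgTaylor {X : Type*} [NormedAddCommGroup X]
    [NormedSpace ℝ X] [CompleteSpace X]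
    (a b : ℝ) (hab : a < b) (η : ℝ → ℝ)
    (hη : ContDiff ℝ (⊤ : ℕ∞) η) (hsupp : Function.support η ⊆ Set.Ioo a b)
    (hη1 : ∫ σ, η σ = 1)
    (s ℓ : ℕ) (hℓ : ℓ ≤ s) (v : ℝ → X) (hv : ContDiff ℝ (s : ℕ∞) v) :
    ∀ τ : ℝ,
      iteratedDeriv ℓ (avgTaylor s (Set.Ioo a b) η v) τ
        = avgTaylor (s - ℓ) (Set.Ioo a b) η (iteratedDeriv ℓ v) τ ∧
      iteratedDeriv ℓ (avgTaylor s (Set.Ioo a b) η v) τ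
        = ∑ j ∈ Finset.range (s - ℓ + 1), ((j.factorial : ℝ))⁻¹ •
            ∫ σ in Set.Ioo a b, ((τ - σ) ^ j * η σ) • iteratedDeriv (ℓ + j) v σ := by
  have hηc : Continuous η := hη.continuous
  have main : ∀ m, m ≤ s → iteratedDeriv m (avgTaylor s (Set.Ioo a b) η v)
      = avgTaylor (s - m) (Set.Ioo a b) η (iteratedDeriv m v) := by
    intro m
    induction m with
    | zero => intro _; simp [iteratedDeriv_zero]
    | succ k ih =>
      intro hk
      have hks : k ≤ s := by omega
      rw [iteratedDeriv_succ, ih hks]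
      have hsk : s - k = (s - (k + 1)) + 1 := by omega
      have hvk : ContDiff ℝ (((s - (k + 1)) + 1 : ℕ) : ℕ∞) (iteratedDeriv k v) := by
        rw [iteratedDeriv_eq_iterate]
        apply ContDiff.iterate_deriv' (s - (k + 1) + 1) k
        have he : (s - (k + 1) + 1) + k = s := by omega
        rw [he]
        exact_mod_cast hv
      funext τ
      rw [hsk]
      rw [(avgTaylor_hasDerivAt' a b η hηc (s - (k + 1)) (iteratedDeriv k v) hvk τ).deriv,
        ← iteratedDeriv_succ]
  intro τ
  have h1 := congrFun (main ℓ hℓ) τ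
  refine ⟨h1, ?_⟩
  rw [h1]
  unfold avgTaylor
  refine Finset.sum_congr rfl fun j _ => ?_
  have hcomp : iteratedDeriv j (iteratedDeriv ℓ v) = iteratedDeriv (ℓ + j) v := by
    rw [iteratedDeriv_eq_iterate, iteratedDeriv_eq_iterate, iteratedDeriv_eq_iterate,
      ← Function.iterate_add_apply, Nat.add_comm j ℓ]
  rw [hcomp]
end
end

section
/- Equality of the two representations of the averaged Taylor polynomial (equation (A.1)): let s ∈ ℕ and let v : ℝ → X be of class C^s. Then for every τ ∈ ℝ, Σ_{ℓ=0}^s (1/ℓ!) ∫_I ((τ−σ)^ℓ · η(σ)) • (iteratedDeriv ℓ v)(σ) dσ = Σ_{ℓ=0}^s ((−1)^ℓ/ℓ!) ∫_I g_{τ,ℓ}(σ) • v(σ) dσ, where for each fixed τ and ℓ the scalar function g_{τ,ℓ} : ℝ → ℝ is the ℓ-th derivative (iteratedDeriv ℓ) of the function σ ↦ (τ−σ)^ℓ · η(σ). -/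
open MeasureTheory Finset Set intervalIntegral
open scoped ContDiff

noncomputable section

section Aux
variable {X : Type*} [NormedAddCommGroup X] [NormedSpace ℝ X] [CompleteSpace X]


lemma deriv_eqOn_zero' {g : ℝ → ℝ} {s : Set ℝ} (hs : IsOpen s)
    (h : Set.EqOn g 0 s) : Set.EqOn (deriv g) 0 s := by
  intro x hx
  have hev : g =ᶠ[nhds x] (fun _ => (0 : ℝ)) :=
    Filter.eventually_of_mem (hs.mem_nhds hx) h
  have := hev.deriv_eq
  simp only [deriv_const] at this
  simpa using this

lemma cont_zero_at' {g : ℝ → ℝ} (hg : Continuous g) {s : Set ℝ} {x : ℝ}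
    (h : Set.EqOn g 0 s) (hx : x ∈ closure s) : g x = 0 :=
  (h.closure hg continuous_const) hx

/-- single integration by parts with vanishing boundary terms -/
lemma ibp_one {a b : ℝ} (g : ℝ → ℝ) (hg : ContDiff ℝ ∞ g)
    (hga : g a = 0) (hgb : g b = 0) (w : ℝ → X) (hw : ContDiff ℝ 1 w) :
    ∫ x in a..b, g x • deriv w x = - ∫ x in a..b, deriv g x • w x := by
  have hder : ∀ x ∈ Set.uIcc a b,
      HasDerivAt (fun y => g y • w y) (g x • deriv w x + deriv g x • w x) x := by
    intro x _
    exact (hg.differentiable (by norm_num) x |>.hasDerivAt).smul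
      ((hw.differentiable one_ne_zero x).hasDerivAt)
  have h1 : Continuous (deriv g) := hg.continuous_deriv (by norm_num)
  have h2 : Continuous (deriv w) := hw.continuous_deriv le_rfl
  have hint1 : IntervalIntegrable (fun x => g x • deriv w x) volume a b :=
    ((hg.continuous).smul h2).intervalIntegrable a b
  have hint2 : IntervalIntegrable (fun x => deriv g x • w x) volume a b :=
    (h1.smul (hw.continuous)).intervalIntegrable a b
  have key := intervalIntegral.integral_eq_sub_of_hasDerivAt hder (hint1.add hint2)
  rw [hga, hgb, zero_smul, zero_smul, sub_zero] at key
  rw [intervalIntegral.integral_add hint1 hint2] at key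
  exact eq_neg_of_add_eq_zero_left key

/-- iterated integration by parts -/
lemma ibp_iter {a b : ℝ} (n : ℕ) (v : ℝ → X)
    (hv : ContDiff ℝ (n : ℕ∞) v) :
    ∀ g : ℝ → ℝ, ContDiff ℝ ∞ g → Set.EqOn g 0 (Set.Iio a) → Set.EqOn g 0 (Set.Ioi b) →
    ∫ x in a..b, g x • iteratedDeriv n v x
      = ((-1 : ℝ) ^ n) • ∫ x in a..b, iteratedDeriv n g x • v x := by
  induction n with
  | zero => intro g _ _ _; simp
  | succ n ih =>
    intro g hg hga hgb
    have hga' : g a = 0 := cont_zero_at' hg.continuous hga (by simp [closure_Iio])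
    have hgb' : g b = 0 := cont_zero_at' hg.continuous hgb (by simp [closure_Ioi])
    have hw : ContDiff ℝ 1 (iteratedDeriv n v) := by
      refine contDiff_one_iff_deriv.mpr ⟨hv.differentiable_iteratedDeriv n ?_, ?_⟩
      · exact_mod_cast Nat.lt_succ_self n
      · rw [← iteratedDeriv_succ]
        exact hv.continuous_iteratedDeriv (n + 1) (by exact_mod_cast le_rfl)
    have hg' : ContDiff ℝ ∞ (deriv g) := (contDiff_infty_iff_deriv.mp hg).2
    have step1 : ∫ x in a..b, g x • iteratedDeriv (n+1) v x
        = - ∫ x in a..b, deriv g x • iteratedDeriv n v x := by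
      rw [iteratedDeriv_succ]
      exact ibp_one g hg hga' hgb' _ hw
    rw [step1, ih (hv.of_le (by exact_mod_cast Nat.le_succ n)) (deriv g) hg'
      (deriv_eqOn_zero' isOpen_Iio hga) (deriv_eqOn_zero' isOpen_Ioi hgb)]
    rw [← iteratedDeriv_succ']
    rw [← neg_smul, pow_succ, mul_comm]
    norm_num

end Aux

/-- **Equality of the two representations of the averaged Taylor polynomial**
(equation (A.1)): for `v` of class `C^s`,
`Σ_{ℓ=0}^s (1/ℓ!) ∫_I ((τ−σ)^ℓ η(σ)) • v^{(ℓ)}(σ) dσ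
  = Σ_{ℓ=0}^s ((−1)^ℓ/ℓ!) ∫_I (d^ℓ/dσ^ℓ)((τ−σ)^ℓ η(σ)) • v(σ) dσ`. -/


theorem avgTaylor_dual_representation {X : Type*} [NormedAddCommGroup X]
    [NormedSpace ℝ X] [CompleteSpace X]
    (a b : ℝ) (hab : a < b) (η : ℝ → ℝ)
    (hη : ContDiff ℝ (⊤ : ℕ∞) η) (hsupp : Function.support η ⊆ Set.Ioo a b)
    (hη1 : ∫ σ, η σ = 1)
    (s : ℕ) (v : ℝ → X) (hv : ContDiff ℝ (s : ℕ∞) v) :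
    ∀ τ : ℝ,
      ∑ ℓ ∈ Finset.range (s + 1), ((ℓ.factorial : ℝ))⁻¹ •
          ∫ σ in Set.Ioo a b, ((τ - σ) ^ ℓ * η σ) • iteratedDeriv ℓ v σ
        = ∑ ℓ ∈ Finset.range (s + 1), ((-1 : ℝ) ^ ℓ / (ℓ.factorial : ℝ)) •
            ∫ σ in Set.Ioo a b,
              (iteratedDeriv ℓ (fun σ' => (τ - σ') ^ ℓ * η σ') σ) • v σ := by
  
  intro τ
  refine Finset.sum_congr rfl fun ℓ hℓ => ?_
  have hℓs : (ℓ : ℕ∞) ≤ (s : ℕ∞) := by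
    exact_mod_cast Nat.lt_succ_iff.mp (Finset.mem_range.mp hℓ)
  set g : ℝ → ℝ := fun σ' => (τ - σ') ^ ℓ * η σ' with hgdef
  have hgC : ContDiff ℝ ∞ g :=
    ((contDiff_const.sub contDiff_id).pow ℓ).mul (hη.of_le (by simp))
  have hzero : ∀ x, x ∉ Set.Ioo a b → g x = 0 := by
    intro x hx
    have : η x = 0 := by
      by_contra h
      exact hx (hsupp h)
    simp [hgdef, this]
  have hga : Set.EqOn g 0 (Set.Iio a) := fun x hx =>
    hzero x (by simp [Set.mem_Ioo]; intro h; linarith [hx.out])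
  have hgb : Set.EqOn g 0 (Set.Ioi b) := fun x hx =>
    hzero x (by simp [Set.mem_Ioo]; intro h; linarith [hx.out])
  have key := ibp_iter ℓ v (hv.of_le (by exact_mod_cast hℓs)) g hgC hga hgb
  have conv1 : ∫ σ in Set.Ioo a b, ((τ - σ) ^ ℓ * η σ) • iteratedDeriv ℓ v σ
      = ∫ x in a..b, g x • iteratedDeriv ℓ v x := by
    rw [intervalIntegral.integral_of_le hab.le, ← integral_Ioc_eq_integral_Ioo]
  have conv2 : ∫ σ in Set.Ioo a b, (iteratedDeriv ℓ g σ) • v σ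
      = ∫ x in a..b, iteratedDeriv ℓ g x • v x := by
    rw [intervalIntegral.integral_of_le hab.le, ← integral_Ioc_eq_integral_Ioo]
  rw [conv1, conv2, key, smul_smul]
  congr 1
  rw [div_eq_mul_inv, mul_comm]
end
end
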